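/- arXiv:1711.09962 — 4 statements merged into one kernel-verified Lean document; each statement's English description precedes it below -/
import Mathlib

section
/- Let p be a nonzero polynomial with real coefficients and positive leading coefficient such that every complex root of p has negative real part. Then every coefficient of p in degrees 0, 1, …, deg p is positive. -/
/-!
Over `ℝ`, a complex root `z` of `p` yields a monic real factor of `p`: `X - z` if `z` is real,
`X² - 2 Re z · X + |z|²` otherwise. When `Re z < 0` both factors have positive coefficients, and
positivity of all coefficients is preserved under products, so induction on the degree finishes.
-/

open Polynomial

namespace Polynomial

section HasPosCoeffs

variable {R : Type*} [Semiring R] [PartialOrder R]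

def HasPosCoeffs (p : R[X]) : Prop :=
  ∀ k ≤ p.natDegree, 0 < p.coeff k

theorem HasPosCoeffs.coeff_nonneg {p : R[X]} (hp : p.HasPosCoeffs) (k : ℕ) : 0 ≤ p.coeff k := by
  rcases le_or_gt k p.natDegree with hk | hk
  · exact (hp k hk).le
  · rw [coeff_eq_zero_of_natDegree_lt hk]

theorem hasPosCoeffs_of_natDegree_eq_zero {p : R[X]} (h : p.natDegree = 0)
    (hl : 0 < p.leadingCoeff) : p.HasPosCoeffs := by
  intro k hk
  rw [h, Nat.le_zero] at hk
  rwa [hk, ← h]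

theorem HasPosCoeffs.mul [IsStrictOrderedRing R] {p q : R[X]} (hp : p.HasPosCoeffs)
    (hq : q.HasPosCoeffs) : (p * q).HasPosCoeffs := by
  intro k hk
  rw [natDegree_mul' (mul_pos (hp _ le_rfl) (hq _ le_rfl)).ne'] at hk
  rw [coeff_mul]
  refine Finset.sum_pos' (fun ij _ => mul_nonneg (hp.coeff_nonneg _) (hq.coeff_nonneg _)) ?_
  refine ⟨(k - min k q.natDegree, min k q.natDegree), ?_, mul_pos (hp _ ?_) (hq _ ?_)⟩
  · simp
  all_goals omega

end HasPosCoeffs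

theorem hasPosCoeffs_X_sub_C {R : Type*} [Ring R] [PartialOrder R] [IsStrictOrderedRing R]
    {r : R} (hr : r < 0) : (X - C r).HasPosCoeffs := by
  intro k hk
  rw [natDegree_X_sub_C] at hk
  interval_cases k <;> simp [hr]

theorem hasPosCoeffs_X_sq_sub_C_mul_X_add_C {R : Type*} [Ring R] [PartialOrder R]
    [IsStrictOrderedRing R] {b c : R} (hb : b < 0) (hc : 0 < c) :
    (X ^ 2 - C b * X + C c).HasPosCoeffs := by
  have hdeg : (X ^ 2 - C b * X + C c).natDegree = 2 := by compute_degree!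
  intro k hk
  rw [hdeg] at hk
  interval_cases k <;> simp [coeff_C, coeff_X, hb, hc]

end Polynomial

def RootsInOpenLeftHalfPlane (p : ℝ[X]) : Prop :=
  ∀ z : ℂ, (p.map (algebraMap ℝ ℂ)).IsRoot z → z.re < 0

theorem RootsInOpenLeftHalfPlane.of_mul_left {d q : ℝ[X]}
    (h : RootsInOpenLeftHalfPlane (d * q)) : RootsInOpenLeftHalfPlane q :=
  fun z hz => h z (by simp only [IsRoot, Polynomial.map_mul, eval_mul, hz.eq_zero, mul_zero])

theorem RootsInOpenLeftHalfPlane.exists_monic_dvd_hasPosCoeffs {p : ℝ[X]}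
    (hp : RootsInOpenLeftHalfPlane p) (hdeg : 0 < p.natDegree) :
    ∃ d : ℝ[X], d ∣ p ∧ d.Monic ∧ 0 < d.natDegree ∧ d.HasPosCoeffs := by
  have hdegC : 0 < (p.map (algebraMap ℝ ℂ)).degree := by
    rwa [degree_map, ← natDegree_pos_iff_degree_pos]
  obtain ⟨z, hz⟩ := Complex.exists_root hdegC
  have hre : z.re < 0 := hp z hz
  have haeval : aeval z p = 0 := by rwa [← eval_map_algebraMap]
  by_cases him : z.im = 0
  · have hz_real : z = algebraMap ℝ ℂ z.re := Complex.ext rfl (by simp [him])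
    refine ⟨X - C z.re, dvd_iff_isRoot.mpr ?_, monic_X_sub_C _, by simp,
      hasPosCoeffs_X_sub_C hre⟩
    rwa [hz_real, aeval_algebraMap_apply, map_eq_zero_iff _ (algebraMap ℝ ℂ).injective] at haeval
  · have hdeg2 : (X ^ 2 - C (2 * z.re) * X + C (‖z‖ ^ 2) : ℝ[X]).natDegree = 2 := by
      compute_degree!
    have hnorm : 0 < ‖z‖ ^ 2 := by
      have : z ≠ 0 := fun h => him (by simp [h])
      positivity
    refine ⟨_, p.quadratic_dvd_of_aeval_eq_zero_im_ne_zero haeval him, ?_, by omega,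
      hasPosCoeffs_X_sq_sub_C_mul_X_add_C (by linarith) hnorm⟩
    monicity!

theorem RootsInOpenLeftHalfPlane.hasPosCoeffs {p : ℝ[X]} (hp : RootsInOpenLeftHalfPlane p)
    (hl : 0 < p.leadingCoeff) : p.HasPosCoeffs := by
  induction hn : p.natDegree using Nat.strong_induction_on generalizing p with
  | _ n ih =>
  rcases Nat.eq_zero_or_pos n with rfl | hpos
  · exact hasPosCoeffs_of_natDegree_eq_zero hn hl
  obtain ⟨d, ⟨q, rfl⟩, hmonic, hd_deg, hd⟩ := hp.exists_monic_dvd_hasPosCoeffs (hn ▸ hpos)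
  have hq0 : q ≠ 0 := right_ne_zero_of_mul (leadingCoeff_ne_zero.mp hl.ne')
  have hql : 0 < q.leadingCoeff := by rwa [leadingCoeff_mul, hmonic.leadingCoeff, one_mul] at hl
  rw [natDegree_mul hmonic.ne_zero hq0] at hn
  exact hd.mul (ih q.natDegree (by omega) hp.of_mul_left hql rfl)

theorem stmt_2_general (p : Polynomial ℝ) (hl : 0 < p.leadingCoeff)
    (hroots : ∀ z : ℂ, (p.map (algebraMap ℝ ℂ)).IsRoot z → z.re < 0) :
    ∀ k ≤ p.natDegree, 0 < p.coeff k :=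
  RootsInOpenLeftHalfPlane.hasPosCoeffs hroots hl

/-- A nonzero real polynomial with positive leading coefficient all of whose complex roots
have negative real part has positive coefficients in all degrees up to its degree. -/
theorem stmt_2 (p : Polynomial ℝ) (hp : p ≠ 0) (hl : 0 < p.leadingCoeff)
    (hroots : ∀ z : ℂ, (p.map (algebraMap ℝ ℂ)).IsRoot z → z.re < 0) :
    ∀ k ≤ p.natDegree, 0 < p.coeff k :=
  stmt_2_general p hl hroots
end

section
/- Let q = (q_1,…,q_d) be a vector of positive integers, let Δ_{(1,q)} ⊆ ℝ^d be the convex hull of e_1, …, e_d and −(q_1,…,q_d), and set s = 1 + q_1 + ⋯ + q_d. For 0 ≤ b ≤ s − 1 define ω(b) = b − Σ_{i=1}^d ⌊q_i·b/s⌋. Then in the ring of formal power series ℚ⟦z⟧ one has (1 − z)^{d+1} · Σ_{t ≥ 0} #(t·Δ_{(1,q)} ∩ ℤ^d)·z^t = Σ_{b=0}^{s−1} z^{ω(b)}; that is, the h*-polynomial of Δ_{(1,q)} is Σ_{b=0}^{q_1+⋯+q_d} z^{ω(b)}. -/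
open Pointwise

lemma adt_length (k : ℕ) : ∀ n : ℕ, (List.Nat.antidiagonalTuple (k+1) n).length = (k + n).choose k := by
  induction k with
  | zero => intro n; rw [List.Nat.antidiagonalTuple_one]; simp
  | succ k ih =>
    intro n
    rw [show k+1+1 = (k+1)+1 from rfl, List.Nat.antidiagonalTuple]
    rw [List.length_flatMap, List.Nat.antidiagonal]
    simp only [List.map_map, Function.comp_def, List.length_map, ih]
    have h0 : ((List.range (n+1)).map (fun x => (k + (n - x)).choose k)).sum
        = ∑ x ∈ Finset.range (n+1), (k + (n - x)).choose k := rfl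
    have h1 : ∑ x ∈ Finset.range (n+1), (k + (n - x)).choose k
        = ∑ x ∈ Finset.range (n+1), (k + x).choose k := by
      rw [← Finset.sum_range_reflect]
      exact Finset.sum_congr rfl fun x hx => by
        congr 2; have := Finset.mem_range.1 hx; omega
    have h2 : ∑ x ∈ Finset.range (n+1), (k + x).choose k
        = ∑ m ∈ Finset.Icc k (k+n), m.choose k := by
      rw [show Finset.Icc k (k+n) = Finset.Ico k (k+n+1) by rw [Finset.Ico_add_one_right_eq_Icc],
        Finset.sum_Ico_eq_sum_range, show k+n+1-k = n+1 by omega]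
    rw [h0, h1, h2, Nat.sum_Icc_choose]
    congr 1; omega

lemma adt_card (k n : ℕ) : (Finset.Nat.antidiagonalTuple (k+1) n).card = (k + n).choose k := by
  show Multiset.card (Multiset.Nat.antidiagonalTuple (k+1) n) = _
  show (List.Nat.antidiagonalTuple (k+1) n).length = _
  exact adt_length k n

lemma int_nonneg_aux (s z r : ℤ) (hs : 0 < s) (hr : r < s) (h : 0 ≤ s * z + r) : 0 ≤ z := by
  by_contra h'
  push_neg at h'
  have hz : z ≤ -1 := by omega
  nlinarith

section
variable (d : ℕ) (q : Fin d → ℕ) (s : ℕ) (ω : ℕ → ℕ) (t : ℕ)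

noncomputable def Gmap : (Σ _ : ℕ, (Fin (d+1) → ℕ)) → (Fin d → ℤ) :=
  fun p i => (p.2 i.succ : ℤ) - (q i : ℤ) * p.2 0 - ((q i * p.1 / s : ℕ) : ℤ)

noncomputable def Uset : Finset (Σ _ : ℕ, (Fin (d+1) → ℕ)) :=
  (Finset.range s).sigma fun b =>
    (Finset.Nat.antidiagonalTuple (d+1) (t - ω b)).filter fun n => (∑ i, n i) + ω b = t

end

lemma count_lemma (d : ℕ) (q : Fin d → ℕ) (hq : ∀ i, 0 < q i) (s : ℕ) (hs : s = 1 + ∑ i, q i)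
    (ω : ℕ → ℕ) (hω : ∀ b, ω b = b - ∑ i, q i * b / s) (t : ℕ) :
    {y : Fin d → ℤ | (∑ i, y i) ≤ (t:ℤ) ∧ ∀ i, 0 ≤ (s:ℤ) * y i + q i * (t - ∑ j, y j)}.ncard
    = ∑ b ∈ Finset.range s, if ω b ≤ t then (d + (t - ω b)).choose d else 0 := by
  have s0 : 0 < s := by omega
  have sZ : (0:ℤ) < s := by exact_mod_cast s0
  have hsq : (∑ i, (q i : ℤ)) = (s:ℤ) - 1 := by
    have : ((∑ i, q i : ℕ) : ℤ) = (s:ℤ) - 1 := by rw [hs]; push_cast; ring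
    rw [← this]; push_cast; ring
  -- facts about k
  have hk_le : ∀ b, ∑ i, q i * b / s ≤ b := by
    intro b
    have h1 : (∑ i, q i * b / s) * s ≤ ∑ i, q i * b := by
      rw [Finset.sum_mul]
      exact Finset.sum_le_sum fun i _ => Nat.div_mul_le_self _ _
    have h2 : ∑ i, q i * b = (s - 1) * b := by
      rw [← Finset.sum_mul]; congr 1; omega
    have h3 : (∑ i, q i * b / s) * s ≤ b * s := by
      calc (∑ i, q i * b / s) * s ≤ (s-1) * b := h1.trans_eq h2
      _ ≤ b * s := by
        rcases b with _ | b
        · simp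
        · calc (s-1)*(b+1) ≤ s * (b+1) := Nat.mul_le_mul_right _ (by omega)
          _ = (b+1) * s := Nat.mul_comm _ _
    exact Nat.le_of_mul_le_mul_right h3 s0
  have hωZ : ∀ b, (ω b : ℤ) = (b : ℤ) - ∑ i, ((q i * b / s : ℕ) : ℤ) := by
    intro b
    rw [hω b, Nat.cast_sub (hk_le b)]
    push_cast
    ring
  have hKR : ∀ b i, (s:ℤ) * ((q i * b / s : ℕ) : ℤ) + ((q i * b % s : ℕ) : ℤ) = (q i : ℤ) * b := by
    intro b i
    have h := Nat.div_add_mod (q i * b) s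
    have h2 : ((s * (q i * b / s) + q i * b % s : ℕ) : ℤ) = ((q i * b : ℕ) : ℤ) := by rw [h]
    rw [Nat.cast_add, Nat.cast_mul, Nat.cast_mul] at h2
    linarith
  have hR_lt : ∀ b i, ((q i * b % s : ℕ) : ℤ) < s := by
    intro b i; exact_mod_cast Nat.mod_lt _ s0
  have hR_nonneg : ∀ b i, (0:ℤ) ≤ ((q i * b % s : ℕ) : ℤ) := fun b i => Int.natCast_nonneg _
  -- sum of G
  have hSG : ∀ b (n : Fin (d+1) → ℕ), b < s → (∑ i, n i) + ω b = t →
      (∑ i, Gmap d q s ⟨b, n⟩ i) = (t:ℤ) - s * (n 0 : ℤ) - b := by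
    intro b n hb hsum
    have hsn : ((n 0 : ℤ)) + (∑ i : Fin d, (n i.succ : ℤ)) + (ω b : ℤ) = t := by
      have : (((∑ i, n i) + ω b : ℕ) : ℤ) = (t : ℤ) := by rw [hsum]
      push_cast at this
      rw [Fin.sum_univ_succ] at this
      push_cast at this
      linarith
    unfold Gmap
    rw [Finset.sum_sub_distrib, Finset.sum_sub_distrib, ← Finset.sum_mul]
    rw [hsq]
    have := hωZ b
    linarith
  -- membership forward: image of U is in T
  have hGmem : ∀ p ∈ Uset d s ω t, (∑ i, Gmap d q s p i) ≤ (t:ℤ) ∧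
      ∀ i, 0 ≤ (s:ℤ) * Gmap d q s p i + q i * (t - ∑ j, Gmap d q s p j) := by
    rintro ⟨b, n⟩ hp
    rw [Uset, Finset.mem_sigma, Finset.mem_filter] at hp
    obtain ⟨hb, _, hsum⟩ := hp
    rw [Finset.mem_range] at hb
    have hS := hSG b n hb hsum
    constructor
    · rw [hS]
      have : (0:ℤ) ≤ s * (n 0 : ℤ) + b := by positivity
      linarith
    · intro i
      have key : (s:ℤ) * Gmap d q s ⟨b, n⟩ i + q i * ((t:ℤ) - ∑ j, Gmap d q s ⟨b, n⟩ j)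
          = s * (n i.succ : ℤ) + ((q i * b % s : ℕ) : ℤ) := by
        rw [hS]
        unfold Gmap
        linear_combination (-1 : ℤ) * hKR b i
      rw [key]
      positivity
  -- surjectivity
  have hGsurj : ∀ y : Fin d → ℤ, (∑ i, y i) ≤ (t:ℤ) → (∀ i, 0 ≤ (s:ℤ) * y i + q i * ((t:ℤ) - ∑ j, y j)) →
      ∃ p ∈ Uset d s ω t, Gmap d q s p = y := by
    intro y h1 h2
    set M : ℕ := ((t:ℤ) - ∑ i, y i).toNat with hMdef
    have hM : (M : ℤ) = (t:ℤ) - ∑ i, y i := Int.toNat_of_nonneg (by linarith)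
    set b := M % s with hbdef
    set n0 := M / s with hn0def
    have hb : b < s := Nat.mod_lt _ s0
    have hMsb : (M:ℤ) = (s:ℤ) * n0 + b := by
      have h := Nat.div_add_mod M s
      exact_mod_cast h.symm
    have hni : ∀ i, 0 ≤ y i + (q i:ℤ) * (n0:ℤ) + ((q i * b / s : ℕ) : ℤ) := by
      intro i
      apply int_nonneg_aux (s:ℤ) _ ((q i * b % s : ℕ):ℤ) sZ (hR_lt b i)
      have h3 := h2 i
      have heq : (s:ℤ) * y i + (q i:ℤ) * ((t:ℤ) - ∑ j, y j)
          = (s:ℤ) * (y i + (q i:ℤ) * n0 + ((q i * b / s:ℕ):ℤ)) + ((q i * b % s:ℕ):ℤ) := by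
        rw [← hM, hMsb]
        linear_combination (-1 : ℤ) * hKR b i
      linarith [heq ▸ h3]
    set n : Fin (d+1) → ℕ := Fin.cons n0 (fun i => (y i + (q i:ℤ) * n0 + ((q i * b / s : ℕ) : ℤ)).toNat) with hndef
    have hn0 : n 0 = n0 := rfl
    have hnsucc : ∀ i, (n i.succ : ℤ) = y i + (q i:ℤ) * n0 + ((q i * b / s : ℕ) : ℤ) := by
      intro i
      rw [hndef, Fin.cons_succ]
      exact Int.toNat_of_nonneg (hni i)
    have hsumn : (∑ i, n i) + ω b = t := by
      have hz : ((∑ i, n i : ℕ) : ℤ) + (ω b : ℤ) = (t:ℤ) := by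
        push_cast
        rw [Fin.sum_univ_succ]
        have hsucc : ∑ i : Fin d, ((n i.succ : ℕ) : ℤ) = (∑ i, y i) + ((s:ℤ) - 1) * n0 + ((b:ℤ) - ω b) := by
          have : ∀ i : Fin d, ((n i.succ : ℕ) : ℤ) = y i + (q i:ℤ) * n0 + ((q i * b / s : ℕ) : ℤ) := hnsucc
          rw [Finset.sum_congr rfl (fun i _ => this i)]
          rw [Finset.sum_add_distrib, Finset.sum_add_distrib, ← Finset.sum_mul, hsq, hωZ b]
          ring
        rw [hn0, hsucc]
        have := hM
        rw [hMsb] at this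
        linarith
      exact_mod_cast hz
    refine ⟨⟨b, n⟩, ?_, ?_⟩
    · rw [Uset, Finset.mem_sigma, Finset.mem_filter, Finset.mem_range]
      refine ⟨hb, Finset.Nat.mem_antidiagonalTuple.2 ?_, ?_⟩
      · show ∑ i, n i = t - ω b
        omega
      · show (∑ i, n i) + ω b = t
        exact hsumn
    · funext i
      show (n i.succ : ℤ) - (q i:ℤ) * (n 0 : ℤ) - ((q i * b / s : ℕ) : ℤ) = y i
      rw [hnsucc i, hn0]
      ring
  -- injectivity
  have hGinj : Set.InjOn (Gmap d q s) ↑(Uset d s ω t) := by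
    rintro ⟨b, n⟩ hp ⟨b', n'⟩ hp' hGeq
    rw [Finset.mem_coe, Uset, Finset.mem_sigma, Finset.mem_filter, Finset.mem_range] at hp hp'
    obtain ⟨hb, _, hsum⟩ := hp
    obtain ⟨hb', _, hsum'⟩ := hp'
    have e1 := hSG b n hb hsum
    have e2 := hSG b' n' hb' hsum'
    rw [hGeq, e2] at e1
    have hsb : (s:ℤ) * (n' 0 : ℤ) + (b':ℤ) = (s:ℤ) * (n 0:ℤ) + (b:ℤ) := by linarith
    have hsbN : s * n' 0 + b' = s * n 0 + b := by exact_mod_cast hsb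
    have hbb : b' = b := by
      have h1 : (s * n' 0 + b') % s = b' := by rw [Nat.mul_add_mod]; exact Nat.mod_eq_of_lt hb'
      have h2' : (s * n 0 + b) % s = b := by rw [Nat.mul_add_mod]; exact Nat.mod_eq_of_lt hb
      rw [← h1, hsbN, h2']
    subst hbb
    have hn00 : n' 0 = n 0 := by
      have : s * n' 0 = s * n 0 := by omega
      exact Nat.eq_of_mul_eq_mul_left s0 this
    have hnn : n = n' := by
      funext j
      refine Fin.cases ?_ ?_ j
      · exact hn00.symm
      · intro i
        have hgi := congrFun hGeq i
        unfold Gmap at hgi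
        simp only at hgi
        rw [hn00] at hgi
        have : ((n i.succ : ℕ) : ℤ) = ((n' i.succ : ℕ) : ℤ) := by omega
        exact_mod_cast this
    rw [hnn]
  -- assemble
  have hset : {y : Fin d → ℤ | (∑ i, y i) ≤ (t:ℤ) ∧ ∀ i, 0 ≤ (s:ℤ) * y i + q i * ((t:ℤ) - ∑ j, y j)}
      = Gmap d q s '' ↑(Uset d s ω t) := by
    ext y
    constructor
    · rintro ⟨h1, h2⟩
      obtain ⟨p, hp, hpy⟩ := hGsurj y h1 h2
      exact ⟨p, hp, hpy⟩
    · rintro ⟨p, hp, rfl⟩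
      exact hGmem p hp
  rw [hset, ← Finset.coe_image, Set.ncard_coe_finset,
    Finset.card_image_of_injOn hGinj, Uset, Finset.card_sigma]
  refine Finset.sum_congr rfl fun b hb => ?_
  by_cases hbt : ω b ≤ t
  · rw [Finset.filter_true_of_mem (fun n hn => by
      rw [Finset.Nat.mem_antidiagonalTuple] at hn; omega), if_pos hbt]
    exact adt_card d (t - ω b)
  · rw [Finset.filter_false_of_mem (fun n hn => by
      rw [Finset.Nat.mem_antidiagonalTuple] at hn; omega), Finset.card_empty, if_neg hbt]

lemma mem_simplex (d : ℕ) (q : Fin d → ℕ) (hq : ∀ i, 0 < q i) (s : ℕ) (hs : s = 1 + ∑ i, q i)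
    (x : Fin d → ℝ) :
    x ∈ convexHull ℝ ({fun i => -(q i : ℝ)} ∪ {x : Fin d → ℝ | ∃ j : Fin d, x = fun i => if i = j then 1 else 0})
    ↔ ((∑ i, x i) ≤ 1 ∧ ∀ i, 0 ≤ (s : ℝ) * x i + q i * (1 - ∑ j, x j)) := by
  have hs1 : (1:ℝ) ≤ (s:ℝ) := by exact_mod_cast Nat.one_le_iff_ne_zero.2 (by omega)
  have hs0 : (0:ℝ) < (s:ℝ) := by linarith
  have hsum : (s:ℝ) = 1 + ∑ i, (q i : ℝ) := by rw [hs]; push_cast; ring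
  set V : Set (Fin d → ℝ) := {fun i => -(q i : ℝ)} ∪ {x : Fin d → ℝ | ∃ j : Fin d, x = fun i => if i = j then 1 else 0} with hV
  constructor
  · -- forward: convexHull ⊆ H
    have hconv : Convex ℝ {x : Fin d → ℝ | (∑ i, x i) ≤ 1 ∧ ∀ i, 0 ≤ (s : ℝ) * x i + q i * (1 - ∑ j, x j)} := by
      intro u hu v hv a b ha hb hab
      simp only [Set.mem_setOf_eq] at hu hv ⊢
      have hsu : ∑ i, (a • u + b • v) i = a * (∑ i, u i) + b * (∑ i, v i) := by
        simp [Finset.sum_add_distrib, Finset.mul_sum]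
      constructor
      · rw [hsu]; nlinarith [hu.1, hv.1]
      · intro i
        have h1 := hu.2 i
        have h2 := hv.2 i
        have : (a • u + b • v) i = a * u i + b * v i := by simp
        rw [this, hsu]
        nlinarith
    intro hx
    refine hconv.convexHull_subset_iff.2 ?_ hx
    rintro y (hy | ⟨j, rfl⟩)
    · simp only [Set.mem_singleton_iff] at hy
      subst hy
      constructor
      · simp only [Finset.sum_neg_distrib]
        nlinarith [hsum]
      · intro i
        simp only [Finset.sum_neg_distrib]
        have : (1 : ℝ) - (- ∑ j, (q j:ℝ)) = s := by rw [hsum]; ring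
        rw [this]; ring_nf
        nlinarith [hq i, (by exact_mod_cast hq i : (0:ℝ) < q i)]
    · have hsj : ∑ i, (if i = j then (1:ℝ) else 0) = 1 := by simp
      constructor
      · rw [hsj]
      · intro i
        rw [hsj]
        by_cases h : i = j <;> simp [h] <;> positivity
  · rintro ⟨h1, h2⟩
    set σ := ∑ i, x i with hσ
    set μ := (1 - σ) / s with hμ
    have hμ0 : 0 ≤ μ := by apply div_nonneg <;> linarith
    set lam : Fin d → ℝ := fun i => x i + μ * q i with hlam
    have hlam0 : ∀ i, 0 ≤ lam i := by
      intro i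
      have := h2 i
      have : 0 ≤ (s:ℝ) * lam i := by
        rw [hlam]; simp only
        rw [hμ]
        field_simp
        nlinarith [h2 i]
      nlinarith
    set w : Option (Fin d) → ℝ := fun o => Option.elim o μ lam with hw
    set v : Option (Fin d) → (Fin d → ℝ) := fun o => Option.elim o (fun i => -(q i : ℝ)) (fun j => fun i => if i = j then 1 else 0) with hvdef
    have hw0 : ∀ o ∈ Finset.univ, 0 ≤ w o := by
      rintro (_ | i) _
      · exact hμ0
      · exact hlam0 i
    have hw1 : ∑ o, w o = 1 := by
      rw [Fintype.sum_option]
      simp only [hw, Option.elim]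
      have : ∑ i, lam i = σ + μ * (s - 1) := by
        rw [hlam]; simp only
        rw [Finset.sum_add_distrib, ← Finset.mul_sum]
        have : ∑ i, (q i : ℝ) = s - 1 := by rw [hsum]; ring
        rw [this, hσ]
      rw [this, hμ]
      field_simp
      ring
    have hvV : ∀ o ∈ Finset.univ, v o ∈ V := by
      rintro (_ | j) _
      · exact Or.inl rfl
      · exact Or.inr ⟨j, rfl⟩
    have key : x = ∑ o, w o • v o := by
      funext i
      rw [Finset.sum_apply]
      rw [Fintype.sum_option]
      simp only [hw, hvdef, Option.elim, Pi.smul_apply, smul_eq_mul]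
      have h3 : ∑ j : Fin d, lam j * (if i = j then (1:ℝ) else 0) = lam i := by
        simp [mul_ite]
      rw [h3, hlam]
      ring
    rw [key]
    exact (convex_convexHull ℝ V).sum_mem hw0 hw1
      (fun o ho => subset_convexHull ℝ V (hvV o ho))

lemma mem_smul_simplex (d : ℕ) (q : Fin d → ℕ) (hq : ∀ i, 0 < q i) (s : ℕ) (hs : s = 1 + ∑ i, q i)
    (t : ℕ) (x : Fin d → ℝ) :
    x ∈ (t:ℝ) • convexHull ℝ ({fun i => -(q i : ℝ)} ∪ {x : Fin d → ℝ | ∃ j : Fin d, x = fun i => if i = j then 1 else 0})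
    ↔ ((∑ i, x i) ≤ t ∧ ∀ i, 0 ≤ (s : ℝ) * x i + q i * (t - ∑ j, x j)) := by
  have hs1 : (1:ℝ) ≤ (s:ℝ) := by exact_mod_cast Nat.one_le_iff_ne_zero.2 (by omega)
  have hs0 : (0:ℝ) < (s:ℝ) := by linarith
  have hsum : (s:ℝ) = 1 + ∑ i, (q i : ℝ) := by rw [hs]; push_cast; ring
  rcases Nat.eq_zero_or_pos t with rfl | ht
  · have hne : (convexHull ℝ ({fun i => -(q i : ℝ)} ∪ {x : Fin d → ℝ | ∃ j : Fin d, x = fun i => if i = j then 1 else 0})).Nonempty :=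
      ⟨fun i => -(q i : ℝ), subset_convexHull ℝ _ (Or.inl rfl)⟩
    rw [Nat.cast_zero, Set.zero_smul_set hne]
    simp only [Set.mem_zero]
    constructor
    · rintro rfl
      constructor
      · simp
      · intro i; simp
    · rintro ⟨h1, h2⟩
      have hσ : 0 ≤ ∑ i, x i := by
        have : ∀ i ∈ Finset.univ, (0:ℝ) ≤ (s:ℝ) * x i + q i * (0 - ∑ j, x j) := fun i _ => h2 i
        have hsum2 := Finset.sum_nonneg this
        rw [Finset.sum_add_distrib, ← Finset.mul_sum, ← Finset.sum_mul] at hsum2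
        have : ∑ i, (q i : ℝ) = s - 1 := by rw [hsum]; ring
        rw [this] at hsum2
        nlinarith
      have hσ0 : ∑ i, x i = 0 := le_antisymm h1 hσ
      have hxi : ∀ i, 0 ≤ x i := by
        intro i
        have := h2 i
        rw [hσ0] at this
        nlinarith
      funext i
      have := (Finset.sum_eq_zero_iff_of_nonneg (fun j _ => hxi j)).1 hσ0 i (Finset.mem_univ i)
      simpa using this
  · have ht0 : ((t:ℝ)) ≠ 0 := by positivity
    have ht0' : (0:ℝ) < t := by positivity
    rw [Set.mem_smul_set_iff_inv_smul_mem₀ ht0]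
    rw [mem_simplex d q hq s hs]
    have hsx : ∑ i, ((t:ℝ)⁻¹ • x) i = (t:ℝ)⁻¹ * ∑ i, x i := by
      simp [Finset.mul_sum]
    rw [hsx]
    constructor
    · rintro ⟨h1, h2⟩
      constructor
      · rw [inv_mul_le_iff₀ ht0', mul_one] at h1; exact h1
      · intro i
        have := h2 i
        simp only [Pi.smul_apply, smul_eq_mul] at this
        have h3 : 0 ≤ (t:ℝ) * ((s:ℝ) * ((t:ℝ)⁻¹ * x i) + q i * (1 - (t:ℝ)⁻¹ * ∑ j, x j)) :=
          mul_nonneg (le_of_lt ht0') this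
        calc (0:ℝ) ≤ _ := h3
        _ = (s:ℝ) * x i + q i * (t - ∑ j, x j) := by field_simp
    · rintro ⟨h1, h2⟩
      constructor
      · rw [inv_mul_le_iff₀ ht0', mul_one]; exact h1
      · intro i
        simp only [Pi.smul_apply, smul_eq_mul]
        have h3 := mul_nonneg (le_of_lt (inv_pos.2 ht0')) (h2 i)
        calc (0:ℝ) ≤ _ := h3
        _ = (s:ℝ) * ((t:ℝ)⁻¹ * x i) + q i * (1 - (t:ℝ)⁻¹ * ∑ j, x j) := by field_simp

/-- Braun–Davis–Solus: the `h*`-polynomial of the simplex `Δ_{(1,q)}` is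
`Σ_{b=0}^{q_1+⋯+q_d} z^{ω(b)}` where `ω(b) = b − Σ_i ⌊q_i b / (1+q_1+⋯+q_d)⌋`. -/
theorem stmt_8 (d : ℕ) (q : Fin d → ℕ) (hq : ∀ i, 0 < q i)
    (Δ : Set (Fin d → ℝ))
    (hΔ : Δ = convexHull ℝ
      ({fun i => -(q i : ℝ)} ∪
        {x : Fin d → ℝ | ∃ j : Fin d, x = fun i => if i = j then 1 else 0}))
    (s : ℕ) (hs : s = 1 + ∑ i, q i)
    (ω : ℕ → ℕ) (hω : ∀ b, ω b = b - ∑ i, q i * b / s) :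
    (1 - PowerSeries.X : PowerSeries ℚ) ^ (d + 1) *
      PowerSeries.mk (fun t =>
        ({x : Fin d → ℝ | x ∈ (t : ℝ) • Δ ∧ ∀ i, ∃ z : ℤ, x i = (z : ℝ)}.ncard : ℚ)) =
    ∑ b ∈ Finset.range s, PowerSeries.X ^ ω b := by
  have hinj : Function.Injective (fun y : Fin d → ℤ => (fun i => (y i : ℝ))) := by
    intro a b hab
    funext i
    have := congrFun hab i
    simp only at this
    exact_mod_cast this
  have hcount : ∀ t : ℕ,
      ({x : Fin d → ℝ | x ∈ (t : ℝ) • Δ ∧ ∀ i, ∃ z : ℤ, x i = (z : ℝ)}.ncard : ℚ)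
      = ∑ b ∈ Finset.range s, if ω b ≤ t then ((d + (t - ω b)).choose d : ℚ) else 0 := by
    intro t
    have hseteq : {x : Fin d → ℝ | x ∈ (t : ℝ) • Δ ∧ ∀ i, ∃ z : ℤ, x i = (z : ℝ)}
        = (fun y : Fin d → ℤ => (fun i => (y i : ℝ))) ''
          {y : Fin d → ℤ | (∑ i, y i) ≤ (t:ℤ) ∧ ∀ i, 0 ≤ (s:ℤ) * y i + q i * ((t:ℤ) - ∑ j, y j)} := by
      ext x
      simp only [Set.mem_setOf_eq, Set.mem_image]
      constructor
      · rintro ⟨hx, hint⟩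
        choose z hz using hint
        have hxz : x = fun i => (z i : ℝ) := funext hz
        rw [hΔ, hxz, mem_smul_simplex d q hq s hs t] at hx
        obtain ⟨h1, h2⟩ := hx
        refine ⟨z, ⟨?_, ?_⟩, hxz.symm⟩
        · have : ((∑ i, z i : ℤ) : ℝ) ≤ ((t:ℤ) : ℝ) := by push_cast; exact_mod_cast h1
          exact_mod_cast this
        · intro i
          have h3 := h2 i
          have : ((0:ℤ):ℝ) ≤ (((s:ℤ) * z i + q i * ((t:ℤ) - ∑ j, z j) : ℤ) : ℝ) := by
            push_cast
            exact_mod_cast h3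
          exact_mod_cast this
      · rintro ⟨y, ⟨h1, h2⟩, rfl⟩
        constructor
        · rw [hΔ, mem_smul_simplex d q hq s hs t]
          constructor
          · have : ((∑ i, y i : ℤ) : ℝ) ≤ ((t:ℤ) : ℝ) := by exact_mod_cast h1
            push_cast at this
            exact_mod_cast this
          · intro i
            have h3 := h2 i
            have : ((0:ℤ):ℝ) ≤ (((s:ℤ) * y i + q i * ((t:ℤ) - ∑ j, y j) : ℤ) : ℝ) := by
              exact_mod_cast h3
            push_cast at this
            exact_mod_cast this
        · exact fun i => ⟨y i, rfl⟩
    rw [hseteq, Set.ncard_image_of_injective _ hinj, count_lemma d q hq s hs ω hω t]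
    push_cast
    exact Finset.sum_congr rfl fun b _ => by split_ifs <;> simp
  have hmk : (PowerSeries.mk (fun t =>
        ({x : Fin d → ℝ | x ∈ (t : ℝ) • Δ ∧ ∀ i, ∃ z : ℤ, x i = (z : ℝ)}.ncard : ℚ)))
      = ∑ b ∈ Finset.range s, PowerSeries.X ^ ω b * (PowerSeries.invOneSubPow ℚ (d+1)).val := by
    ext n
    rw [PowerSeries.coeff_mk, map_sum, hcount n]
    refine Finset.sum_congr rfl fun b _ => ?_
    rw [PowerSeries.invOneSubPow_val_succ_eq_mk_add_choose, PowerSeries.coeff_X_pow_mul']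
    split_ifs with h
    · rw [PowerSeries.coeff_mk]
    · rfl
  rw [hmk, Finset.mul_sum]
  refine Finset.sum_congr rfl fun b _ => ?_
  calc (1 - PowerSeries.X : PowerSeries ℚ) ^ (d + 1) *
        (PowerSeries.X ^ ω b * (PowerSeries.invOneSubPow ℚ (d+1)).val)
      = PowerSeries.X ^ ω b *
        ((1 - PowerSeries.X : PowerSeries ℚ) ^ (d + 1) * (PowerSeries.invOneSubPow ℚ (d+1)).val) := by
        ring
    _ = PowerSeries.X ^ ω b * 1 := by
        rw [← PowerSeries.invOneSubPow_inv_eq_one_sub_pow, Units.inv_val]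
    _ = PowerSeries.X ^ ω b := mul_one _
end

section
/- Fix k ≥ 1 and for t ∈ ℕ let i(t) be the number of integer arrays (x_{i,j}) ∈ ℤ^{2k}, indexed by i ∈ {1,2} and j ∈ {1,…,k}, satisfying 0 ≤ x_{i,j} ≤ t for all i,j and x_{i,j} ≤ x_{i',j'} whenever j < j'. (This is the Ehrhart counting function of the order polytope O(P_k) of the ordinal sum P_k of k two-element antichains.) Then in the ring of formal power series ℚ⟦z⟧ one has (1 − z)^{2k+1} · Σ_{t ≥ 0} i(t)·z^t = (1 + z)^k; that is, the h*-polynomial of O(P_k) is (1+z)^k. -/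
/-!
Let `c k t` be the number of lattice points of `t • O(P_k)`. Fixing the values `a, b ≤ t` of the
top antichain leaves exactly a lattice point of `(min a b) • O(P_{k-1})`, so
`c k t = ∑_{a,b ≤ t} c (k-1) (min a b) = ∑_{m + j = t} (2j + 1) c (k-1) m`, because exactly
`2j + 1` pairs in `[0, t]²` have minimum `t - j`. Since `∑ (2n + 1) zⁿ = (1 + z) / (1 - z)²` and
`c 0 = 1`, induction on `k` gives the generating function `(1 + z)^k / (1 - z)^(2k + 1)`.
-/

open Finset PowerSeries

theorem sum_range_sum_range_min {M : Type*} [AddCommMonoid M] (g : ℕ → M) (t : ℕ) :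
    ∑ a ∈ range (t + 1), ∑ b ∈ range (t + 1), g (min a b) =
      ∑ p ∈ antidiagonal t, (2 * p.2 + 1) • g p.1 := by
  induction t generalizing g with
  | zero => simp
  | succ t ih =>
    rw [Nat.sum_antidiagonal_succ, ← ih (fun m => g (m + 1))]
    simp only [sum_range_succ' _ (t + 1), Nat.add_min_add_right, Nat.zero_min, Nat.min_zero,
      sum_add_distrib, sum_const, card_range, add_smul, two_mul, one_smul]
    abel

theorem mk_two_mul_add_one {R : Type*} [CommRing R] :
    PowerSeries.mk (fun n => (2 * n + 1 : R)) = (1 + X) * PowerSeries.mk 1 ^ 2 := by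
  rw [PowerSeries.mk_one_pow_eq_mk_choose_add]
  ext n
  rcases n with _ | n <;> simp [add_mul, coeff_succ_X_mul]
  ring

noncomputable def orderPolytopePoints (k t : ℕ) : Finset (Fin 2 → Fin k → ℤ) :=
  {x ∈ Fintype.piFinset fun _ => Fintype.piFinset fun _ => Icc 0 (t : ℤ) |
    ∀ a j a' j', j < j' → x a j ≤ x a' j'}

theorem mem_orderPolytopePoints {k t : ℕ} {x : Fin 2 → Fin k → ℤ} :
    x ∈ orderPolytopePoints k t ↔
      (∀ a j, 0 ≤ x a j ∧ x a j ≤ t) ∧ ∀ a j a' j', j < j' → x a j ≤ x a' j' := by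
  simp [orderPolytopePoints]

theorem coe_orderPolytopePoints (k t : ℕ) :
    (orderPolytopePoints k t : Set (Fin 2 → Fin k → ℤ)) =
      {x | (∀ a j, 0 ≤ x a j ∧ x a j ≤ (t : ℤ)) ∧ ∀ a j a' j', j < j' → x a j ≤ x a' j'} :=
  Set.ext fun _ => mem_orderPolytopePoints

theorem card_orderPolytopePoints_zero (t : ℕ) : #(orderPolytopePoints 0 t) = 1 :=
  card_eq_one.2 ⟨fun _ => Fin.elim0, by ext x; simp [mem_orderPolytopePoints, funext_iff]⟩

theorem snoc_mem_orderPolytopePoints_succ {k t a b : ℕ} {y : Fin 2 → Fin k → ℤ} :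
    (fun i => Fin.snoc (y i) ((![a, b] : Fin 2 → ℤ) i)) ∈ orderPolytopePoints (k + 1) t ↔
      a ≤ t ∧ b ≤ t ∧ y ∈ orderPolytopePoints k (min a b) := by
  simp only [mem_orderPolytopePoints, Fin.forall_fin_two]
  simp only [Fin.forall_fin_succ', Fin.snoc_castSucc, Fin.snoc_last,
    Fin.castSucc_lt_castSucc_iff, Fin.castSucc_lt_last, lt_irrefl, not_lt.2 (Fin.le_last _),
    Matrix.cons_val_zero, Matrix.cons_val_one, true_implies, false_implies, implies_true, and_true,
    Nat.cast_min, le_min_iff, Nat.cast_nonneg, Nat.cast_le, true_and]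
  grind

theorem card_filter_lastColumn_orderPolytopePoints_succ {k t a b : ℕ} (hat : a ≤ t)
    (hbt : b ≤ t) :
    #{x ∈ orderPolytopePoints (k + 1) t |
        (x 0 (Fin.last k), x 1 (Fin.last k)) = ((a : ℤ), (b : ℤ))} =
      #(orderPolytopePoints k (min a b)) := by
  have snoc_init : ∀ x : Fin 2 → Fin (k + 1) → ℤ,
      (x 0 (Fin.last k), x 1 (Fin.last k)) = ((a : ℤ), (b : ℤ)) →
      (fun i => Fin.snoc (Fin.init (x i)) ((![a, b] : Fin 2 → ℤ) i)) = x := by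
    intro x hx
    simp only [Prod.ext_iff] at hx
    funext i
    fin_cases i <;> simp [← hx.1, ← hx.2]
  refine card_nbij' (fun x i => Fin.init (x i))
    (fun y i => Fin.snoc (y i) ((![a, b] : Fin 2 → ℤ) i)) ?_ ?_ ?_ ?_
  · intro x hx
    obtain ⟨hx, hlast⟩ := mem_filter.1 hx
    rw [← snoc_init x hlast, snoc_mem_orderPolytopePoints_succ] at hx
    exact hx.2.2
  · intro y hy
    simp [snoc_mem_orderPolytopePoints_succ, hat, hbt, mem_coe.1 hy]
  · intro x hx
    exact snoc_init x (mem_filter.1 hx).2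
  · intro y _
    simp

theorem card_orderPolytopePoints_succ (k t : ℕ) :
    #(orderPolytopePoints (k + 1) t) =
      ∑ a ∈ range (t + 1), ∑ b ∈ range (t + 1), #(orderPolytopePoints k (min a b)) := by
  let lastColumns := (range (t + 1) ×ˢ range (t + 1)).map
    (Nat.castEmbedding.prodMap Nat.castEmbedding : ℕ × ℕ ↪ ℤ × ℤ)
  have hmaps : ∀ x ∈ orderPolytopePoints (k + 1) t,
      (x 0 (Fin.last k), x 1 (Fin.last k)) ∈ lastColumns := by
    intro x hx
    have h0 := (mem_orderPolytopePoints.1 hx).1 0 (Fin.last k)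
    have h1 := (mem_orderPolytopePoints.1 hx).1 1 (Fin.last k)
    simp only [lastColumns, mem_map, mem_product, mem_range, Order.lt_add_one_iff,
      Function.Embedding.coe_prodMap, Prod.exists, Prod.map_apply, Nat.castEmbedding_apply,
      Prod.mk.injEq]
    exact ⟨(x 0 (Fin.last k)).toNat, (x 1 (Fin.last k)).toNat, ⟨by omega, by omega⟩, by omega,
      by omega⟩
  rw [card_eq_sum_card_fiberwise hmaps, sum_map, sum_product]
  refine sum_congr rfl fun a ha => sum_congr rfl fun b hb => ?_
  exact card_filter_lastColumn_orderPolytopePoints_succ (mem_range_succ_iff.1 ha)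
    (mem_range_succ_iff.1 hb)

theorem mk_card_orderPolytopePoints_succ {R : Type*} [CommRing R] (k : ℕ) :
    PowerSeries.mk (fun t => (#(orderPolytopePoints (k + 1) t) : R)) =
      PowerSeries.mk (fun t => (#(orderPolytopePoints k t) : R)) *
        PowerSeries.mk (fun n => (2 * n + 1 : R)) := by
  ext t
  rw [coeff_mk, card_orderPolytopePoints_succ,
    sum_range_sum_range_min (fun m => #(orderPolytopePoints k m)), coeff_mul]
  simp [mul_comm]

theorem one_sub_X_pow_mul_mk_card_orderPolytopePoints {R : Type*} [CommRing R] (k : ℕ) :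
    (1 - X : R⟦X⟧) ^ (2 * k + 1) * PowerSeries.mk (fun t => (#(orderPolytopePoints k t) : R)) =
      (1 + X) ^ k := by
  induction k with
  | zero =>
    simp only [card_orderPolytopePoints_zero, Nat.cast_one, mul_zero, zero_add, pow_one, pow_zero]
    exact (mul_comm _ _).trans (mk_one_mul_one_sub_eq_one R)
  | succ k ih =>
    calc (1 - X) ^ (2 * (k + 1) + 1) *
          PowerSeries.mk (fun t => (#(orderPolytopePoints (k + 1) t) : R))
        = ((1 - X) ^ (2 * k + 1) * PowerSeries.mk (fun t => (#(orderPolytopePoints k t) : R))) *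
            (1 + X) * (PowerSeries.mk 1 * (1 - X)) ^ 2 := by
          rw [mk_card_orderPolytopePoints_succ, mk_two_mul_add_one]
          ring
      _ = (1 + X) ^ (k + 1) := by rw [ih, mk_one_mul_one_sub_eq_one]; ring

theorem stmt_9_general (k : ℕ) (i : ℕ → ℕ)
    (hi : ∀ t : ℕ, i t = {x : Fin 2 → Fin k → ℤ |
      (∀ a j, 0 ≤ x a j ∧ x a j ≤ (t : ℤ)) ∧
      ∀ a j a' j', j < j' → x a j ≤ x a' j'}.ncard) :
    (1 - PowerSeries.X : PowerSeries ℚ) ^ (2 * k + 1) *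
      PowerSeries.mk (fun t => (i t : ℚ)) =
    (1 + PowerSeries.X) ^ k := by
  have hcount : ∀ t, (i t : ℚ) = #(orderPolytopePoints k t) := fun t => by
    rw [hi t, ← coe_orderPolytopePoints, Set.ncard_coe_finset]
  simp only [hcount]
  exact one_sub_X_pow_mul_mk_card_orderPolytopePoints k

/-- The `h*`-polynomial of the order polytope of the ordinal sum of `k` two-element
antichains is `(1+z)^k`:  `(1-z)^{2k+1} · Σ_t i(t) z^t = (1+z)^k`. -/
theorem stmt_9 (k : ℕ) (hk : 1 ≤ k) (i : ℕ → ℕ)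
    (hi : ∀ t : ℕ, i t = {x : Fin 2 → Fin k → ℤ |
      (∀ a j, 0 ≤ x a j ∧ x a j ≤ (t : ℤ)) ∧
      ∀ a j a' j', j < j' → x a j ≤ x a' j'}.ncard) :
    (1 - PowerSeries.X : PowerSeries ℚ) ^ (2 * k + 1) *
      PowerSeries.mk (fun t => (i t : ℚ)) =
    (1 + PowerSeries.X) ^ k :=
  stmt_9_general k i hi
end

section
/- For every positive integer m, the Reeve tetrahedron T_m = conv{(0,0,0), (1,0,0), (0,1,0), (1,1,m)} ⊆ ℝ³ satisfies 6·#(tT_m ∩ ℤ³) = m·t³ + 6·t² + (12 − m)·t + 6 for every t ∈ ℕ; in particular, when m ≥ 13 the linear coefficient (12 − m)/6 of the Ehrhart polynomial of T_m is negative. -/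
/-!
In the barycentric coordinates `(t - x - y + z/m, x - z/m, y - z/m, z/m)`, the dilate `t • T_m` is
the set of `(x, y, z)` with `0 ≤ z ≤ m · min x y` and `m (x + y - t) ≤ z`. Its lattice points have
nonnegative coordinates, and the fibre over `(x, y)` with `x, y ≤ t` is the interval
`m (x + y - t)⁺ ≤ z ≤ m · min x y`, holding `m (min x y - (x + y - t)⁺) + 1` points. Summing over
`y` gives `m x (t - x) + t + 1`, and `6 ∑ₓ x (t - x) = t³ - t`.
-/

open Finset Pointwise

section ConvexHull

variable {ι E : Type*} [Fintype ι] [AddCommGroup E] [Module ℝ E]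

theorem convexHull_range_eq_image_stdSimplex (p : ι → E) :
    convexHull ℝ (Set.range p) = Fintype.linearCombination ℝ p '' stdSimplex ℝ ι := by
  classical
  rw [← convexHull_rangle_single_eq_stdSimplex, LinearMap.image_convexHull, ← Set.range_comp]
  congr 1
  ext i
  simp [Fintype.linearCombination_apply, Pi.single_apply]

theorem smul_stdSimplex [Nonempty ι] {t : ℝ} (ht : 0 ≤ t) :
    t • stdSimplex ℝ ι = {w | (∀ i, 0 ≤ w i) ∧ ∑ i, w i = t} := by
  classical
  ext w
  constructor
  · rintro ⟨u, ⟨hu₀, hu₁⟩, rfl⟩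
    exact ⟨fun i => mul_nonneg ht (hu₀ i), by simp [← mul_sum, hu₁]⟩
  · rintro ⟨hw₀, hw₁⟩
    rcases ht.eq_or_lt with rfl | ht
    · have hw : w = 0 :=
        funext fun i => (sum_eq_zero_iff_of_nonneg fun i _ => hw₀ i).1 hw₁ i (mem_univ i)
      obtain ⟨i⟩ := ‹Nonempty ι›
      exact ⟨Pi.single i 1, single_mem_stdSimplex ℝ i, by simp [hw]⟩
    · refine ⟨t⁻¹ • w, ⟨fun i => mul_nonneg (inv_nonneg.2 ht.le) (hw₀ i), ?_⟩,
        smul_inv_smul₀ ht.ne' w⟩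
      simp [← mul_sum, hw₁, ht.ne']

theorem mem_smul_convexHull_range_iff [Nonempty ι] (p : ι → E) {t : ℝ} (ht : 0 ≤ t) {v : E} :
    v ∈ t • convexHull ℝ (Set.range p) ↔
      ∃ w : ι → ℝ, (∀ i, 0 ≤ w i) ∧ ∑ i, w i = t ∧ ∑ i, w i • p i = v := by
  rw [convexHull_range_eq_image_stdSimplex, ← image_smul_set, smul_stdSimplex ht]
  simp [Fintype.linearCombination_apply, and_assoc]

end ConvexHull

def reeveTetrahedron (m : ℝ) : Set (Fin 3 → ℝ) :=
  convexHull ℝ {![0, 0, 0], ![1, 0, 0], ![0, 1, 0], ![1, 1, m]}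

theorem mem_smul_reeveTetrahedron_iff {m : ℝ} (hm : 0 < m) {t : ℝ} (ht : 0 ≤ t) {v : Fin 3 → ℝ} :
    v ∈ t • reeveTetrahedron m ↔
      0 ≤ v 2 ∧ v 2 ≤ m * v 0 ∧ v 2 ≤ m * v 1 ∧ m * v 0 + m * v 1 ≤ v 2 + m * t := by
  have hvertices : ({![0, 0, 0], ![1, 0, 0], ![0, 1, 0], ![1, 1, m]} : Set (Fin 3 → ℝ)) =
      Set.range ![![0, 0, 0], ![1, 0, 0], ![0, 1, 0], ![1, 1, m]] := by
    simp only [Matrix.range_cons, Matrix.range_empty, Set.union_empty, Set.singleton_union]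
  have hcomb (w : Fin 4 → ℝ) : ∑ i, w i • ![![0, 0, 0], ![1, 0, 0], ![0, 1, 0], ![1, 1, m]] i =
      ![w 1 + w 3, w 2 + w 3, m * w 3] := by
    ext j
    fin_cases j <;> simp [Fin.sum_univ_four, mul_comm]
  rw [reeveTetrahedron, hvertices, mem_smul_convexHull_range_iff _ ht]
  simp only [hcomb]
  constructor
  · rintro ⟨w, hw, hsum, rfl⟩
    simp only [Fin.sum_univ_four] at hsum
    simp only [Matrix.cons_val]
    exact ⟨mul_nonneg hm.le (hw 3), by nlinarith [hw 1], by nlinarith [hw 2], by nlinarith [hw 0]⟩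
  · rintro ⟨h0, h1, h2, h3⟩
    obtain ⟨c, hc⟩ : ∃ c, v 2 = m * c := ⟨v 2 / m, by field_simp⟩
    rw [hc] at h0 h1 h2 h3
    rw [← mul_add, ← mul_add] at h3
    have h0 := (mul_nonneg_iff_of_pos_left hm).1 h0
    have h1 := le_of_mul_le_mul_left h1 hm
    have h2 := le_of_mul_le_mul_left h2 hm
    have h3 := le_of_mul_le_mul_left h3 hm
    refine ⟨![t - v 0 - v 1 + c, v 0 - c, v 1 - c, c], ?_, ?_, ?_⟩
    · intro i
      fin_cases i <;> simp only [Fin.isValue, Fin.reduceFinMk, Fin.zero_eta, Fin.mk_one,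
        Matrix.cons_val, Matrix.cons_val_zero, Matrix.cons_val_one] <;> linarith
    · simp only [Fin.sum_univ_four, Matrix.cons_val]
      ring
    · ext j
      fin_cases j <;> simp [hc]

/-- The lattice points of `t • T_m`; the box bounds follow from the inequalities and only make the
set visibly finite. -/
def reeveLatticePoints (m t : ℕ) : Finset (ℕ × ℕ × ℕ) :=
  {q ∈ range (t + 1) ×ˢ range (t + 1) ×ˢ range (m * t + 1) |
    q.2.2 ≤ m * q.1 ∧ q.2.2 ≤ m * q.2.1 ∧ m * q.1 + m * q.2.1 ≤ q.2.2 + m * t}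

theorem mem_reeveLatticePoints {m t : ℕ} (hm : 0 < m) {q : ℕ × ℕ × ℕ} :
    q ∈ reeveLatticePoints m t ↔
      q.2.2 ≤ m * q.1 ∧ q.2.2 ≤ m * q.2.1 ∧ m * q.1 + m * q.2.1 ≤ q.2.2 + m * t := by
  obtain ⟨x, y, z⟩ := q
  simp only [reeveLatticePoints, mem_filter, mem_product, mem_range, Nat.lt_succ_iff]
  refine ⟨fun h => h.2, fun h => ⟨⟨?_, ?_, ?_⟩, h⟩⟩
  · exact Nat.le_of_mul_le_mul_left (by omega) hm
  · exact Nat.le_of_mul_le_mul_left (by omega) hm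
  · omega

theorem card_reeveLatticePoints_fiber {m t x y : ℕ} (hx : x ≤ t) (hy : y ≤ t) :
    #{z ∈ range (m * t + 1) | z ≤ m * x ∧ z ≤ m * y ∧ m * x + m * y ≤ z + m * t} =
      m * (min x y - (x + y - t)) + 1 := by
  have hmx := Nat.mul_le_mul_left m hx
  have hmy := Nat.mul_le_mul_left m hy
  have hfiber : {z ∈ range (m * t + 1) | z ≤ m * x ∧ z ≤ m * y ∧ m * x + m * y ≤ z + m * t} =
      Icc (m * (x + y - t)) (m * min x y) := by
    ext z
    simp only [mem_filter, mem_range, mem_Icc, Nat.mul_sub, mul_add, ← Nat.mul_min_mul_left]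
    omega
  rw [hfiber, Nat.card_Icc]
  simp only [Nat.mul_sub, mul_add, ← Nat.mul_min_mul_left]
  omega

theorem card_reeveLatticePoints (m t : ℕ) :
    #(reeveLatticePoints m t) =
      ∑ x ∈ range (t + 1), ∑ y ∈ range (t + 1), (m * (min x y - (x + y - t)) + 1) := by
  rw [reeveLatticePoints, card_filter, sum_product]
  refine sum_congr rfl fun x hx => ?_
  rw [sum_product]
  refine sum_congr rfl fun y hy => ?_
  rw [← card_filter, card_reeveLatticePoints_fiber (Nat.lt_succ_iff.1 (mem_range.1 hx))
    (Nat.lt_succ_iff.1 (mem_range.1 hy))]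

theorem sum_range_min_sub_tsub {x t : ℕ} (hx : x ≤ t) :
    ∑ y ∈ range (t + 1), (min x y - (x + y - t)) = x * (t - x) := by
  obtain ⟨k, rfl⟩ := Nat.exists_eq_add_of_le hx
  have hmin : ∑ y ∈ range (x + k + 1), min x y = ∑ y ∈ range (x + 1), y + k * x := by
    rw [show x + k + 1 = x + 1 + k by omega, sum_range_add]
    congr 1
    · exact sum_congr rfl fun y hy => min_eq_right (Nat.lt_succ_iff.1 (mem_range.1 hy))
    · rw [sum_congr rfl fun y _ => min_eq_left (by omega), sum_const, card_range, smul_eq_mul]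
  have hexcess : ∑ y ∈ range (x + k + 1), (x + y - (x + k)) = ∑ y ∈ range (x + 1), y := by
    rw [show x + k + 1 = k + (x + 1) by omega, sum_range_add,
      sum_eq_zero fun y hy => by simp at hy; omega, zero_add]
    exact sum_congr rfl fun y _ => by omega
  rw [sum_tsub_distrib _ fun y hy => by simp at hy; omega, hmin, hexcess, Nat.add_sub_cancel_left,
    Nat.add_sub_cancel_left, mul_comm]

theorem six_mul_sum_range_mul_sub_add (t : ℕ) :
    6 * ∑ x ∈ range (t + 1), x * (t - x) + t = t ^ 3 := by
  induction t with
  | zero => simp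
  | succ t ih =>
    have hstep : ∑ x ∈ range (t + 1), x * (t + 1 - x) =
        ∑ x ∈ range (t + 1), x * (t - x) + ∑ x ∈ range (t + 1), x := by
      rw [← sum_add_distrib]
      refine sum_congr rfl fun x hx => ?_
      rw [Nat.sub_add_comm (Nat.lt_succ_iff.1 (mem_range.1 hx)), Nat.mul_succ]
    have hgauss := sum_range_id_mul_two (t + 1)
    rw [sum_range_succ, Nat.sub_self, mul_zero, add_zero, hstep]
    simp only [Nat.add_sub_cancel] at hgauss
    nlinarith

theorem six_mul_card_reeveLatticePoints_add (m t : ℕ) :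
    6 * #(reeveLatticePoints m t) + m * t = m * t ^ 3 + 6 * (t + 1) ^ 2 := by
  have hcard : #(reeveLatticePoints m t) = m * ∑ x ∈ range (t + 1), x * (t - x) + (t + 1) ^ 2 := by
    rw [card_reeveLatticePoints]
    simp only [sum_add_distrib, ← mul_sum, sum_const, card_range, smul_eq_mul, mul_one]
    rw [sum_congr rfl fun x hx => sum_range_min_sub_tsub (Nat.lt_succ_iff.1 (mem_range.1 hx))]
    ring
  rw [hcard, ← six_mul_sum_range_mul_sub_add t]
  ring

def castPoint (q : ℕ × ℕ × ℕ) : Fin 3 → ℝ := ![q.1, q.2.1, q.2.2]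

theorem castPoint_injective : Function.Injective castPoint := by
  rintro ⟨x, y, z⟩ ⟨x', y', z'⟩ h
  have h0 := congrFun h 0
  have h1 := congrFun h 1
  have h2 := congrFun h 2
  simp only [castPoint, Matrix.cons_val, Nat.cast_inj] at h0 h1 h2
  rw [h0, h1, h2]

theorem castPoint_mem_smul_reeveTetrahedron_iff {m : ℕ} (hm : 0 < m) (t : ℕ) (q : ℕ × ℕ × ℕ) :
    castPoint q ∈ (t : ℝ) • reeveTetrahedron m ↔ q ∈ reeveLatticePoints m t := by
  rw [mem_smul_reeveTetrahedron_iff (Nat.cast_pos.2 hm) t.cast_nonneg, mem_reeveLatticePoints hm]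
  simp only [castPoint, Matrix.cons_val, Nat.cast_nonneg, true_and]
  norm_cast

theorem exists_nat_eq_of_exists_int_eq {r : ℝ} (h : ∃ z : ℤ, r = z) (hr : 0 ≤ r) :
    ∃ n : ℕ, r = n := by
  obtain ⟨z, rfl⟩ := h
  lift z to ℕ using Int.cast_nonneg_iff.1 hr
  exact ⟨z, by simp⟩

theorem setOf_integral_mem_smul_reeveTetrahedron {m : ℕ} (hm : 0 < m) (t : ℕ) :
    {v : Fin 3 → ℝ | v ∈ (t : ℝ) • reeveTetrahedron m ∧ ∀ i, ∃ z : ℤ, v i = z} =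
      castPoint '' reeveLatticePoints m t := by
  ext v
  constructor
  · rintro ⟨hv, hint⟩
    have hm' : (0 : ℝ) < m := Nat.cast_pos.2 hm
    obtain ⟨h0, h1, h2, -⟩ := (mem_smul_reeveTetrahedron_iff hm' t.cast_nonneg).1 hv
    obtain ⟨x, hx⟩ := exists_nat_eq_of_exists_int_eq (hint 0)
      ((mul_nonneg_iff_of_pos_left hm').1 (h0.trans h1))
    obtain ⟨y, hy⟩ := exists_nat_eq_of_exists_int_eq (hint 1)
      ((mul_nonneg_iff_of_pos_left hm').1 (h0.trans h2))
    obtain ⟨z, hz⟩ := exists_nat_eq_of_exists_int_eq (hint 2) h0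
    have hvq : v = castPoint (x, y, z) := by
      ext i
      fin_cases i <;> simp [castPoint, hx, hy, hz]
    subst hvq
    exact ⟨(x, y, z), (castPoint_mem_smul_reeveTetrahedron_iff hm t _).1 hv, rfl⟩
  · rintro ⟨q, hq, rfl⟩
    refine ⟨(castPoint_mem_smul_reeveTetrahedron_iff hm t q).2 hq, fun i => ?_⟩
    fin_cases i
    exacts [⟨q.1, by simp [castPoint]⟩, ⟨q.2.1, by simp [castPoint]⟩, ⟨q.2.2, by simp [castPoint]⟩]

/-- The Reeve tetrahedron `T_m = conv{(0,0,0),(1,0,0),(0,1,0),(1,1,m)}` satisfies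
`6·i(T_m,t) = m t³ + 6 t² + (12 − m) t + 6`; in particular for `m ≥ 13` the linear
coefficient `(12 − m)/6` of its Ehrhart polynomial is negative. -/
theorem stmt_19 (m : ℕ) (hm : 1 ≤ m)
    (T : Set (Fin 3 → ℝ))
    (hT : T = convexHull ℝ
      {![0, 0, 0], ![1, 0, 0], ![0, 1, 0], ![1, 1, (m : ℝ)]}) :
    (∀ t : ℕ,
      6 * ({x : Fin 3 → ℝ | x ∈ (t : ℝ) • T ∧ ∀ i, ∃ z : ℤ, x i = (z : ℝ)}.ncard : ℤ) =
        (m : ℤ) * (t : ℤ) ^ 3 + 6 * (t : ℤ) ^ 2 + (12 - (m : ℤ)) * (t : ℤ) + 6) ∧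
    (13 ≤ m → (12 - (m : ℚ)) / 6 < 0) := by
  obtain rfl : T = reeveTetrahedron m := hT
  refine ⟨fun t => ?_, fun h13 => ?_⟩
  · rw [setOf_integral_mem_smul_reeveTetrahedron hm t,
      Set.ncard_image_of_injective _ castPoint_injective, Set.ncard_coe_finset]
    have h := six_mul_card_reeveLatticePoints_add m t
    zify at h
    linear_combination h
  · have : (13 : ℚ) ≤ m := by exact_mod_cast h13
    linarith
end
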